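/- arXiv:math/0612185 — 4 statements merged into one kernel-verified Lean document; each statement's English description precedes it below -/
import Mathlib

section
/- Let A be a commutative ring, K a field, and α* : A → K[[t]] a ring homomorphism. Let 𝔞 ⊆ A be an ideal and m ∈ ℕ with ord_t(α*(a)) ≥ m for all a ∈ 𝔞. If x ∈ A is integral over 𝔞 (i.e., satisfies x^n + a₁x^{n-1} + ⋯ + aₙ = 0 with aᵢ ∈ 𝔞^i), then ord_t(α*(x)) ≥ m. -/
/-!
Along `φ`, the order of vanishing is an additive valuation `v` on `A` with `v ≥ m` on `𝔞`, hence
`v ≥ i • m` on `𝔞 ^ i`. If `v x = d < m`, then in the integral equation every term `aᵢ xⁿ⁻ⁱ` has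
valuation at least `i • m + (n - i) • d > n • d = v (xⁿ)`, so `xⁿ` cannot cancel against their sum.
-/

open PowerSeries

noncomputable def PowerSeries.orderAddValuation (R : Type*) [Ring R] [NoZeroDivisors R]
    [Nontrivial R] : AddValuation R⟦X⟧ ℕ∞ :=
  AddValuation.of order order_zero order_one min_order_le_order_add order_mul

namespace AddValuation

variable {R Γ : Type*} [CommRing R]

theorem nsmul_le_of_mem_pow [LinearOrderedAddCommMonoidWithTop Γ] [CanonicallyOrderedAdd Γ]
    (v : AddValuation R Γ) {I : Ideal R} {g : Γ} (hI : ∀ a ∈ I, g ≤ v a) (i : ℕ) {b : R}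
    (hb : b ∈ I ^ i) : i • g ≤ v b := by
  induction i generalizing b with
  | zero => simp
  | succ i ih =>
    rw [pow_succ] at hb
    refine Submodule.mul_induction_on hb (fun p hp q hq => ?_) (fun p q hp hq => v.map_le_add hp hq)
    rw [v.map_mul, succ_nsmul]
    exact add_le_add (ih hp) (hI q hq)

theorem le_of_integral_over_ideal (v : AddValuation R ℕ∞) {I : Ideal R} {g : ℕ∞}
    (hI : ∀ a ∈ I, g ≤ v a) {x : R} {n : ℕ} {a : ℕ → R}
    (ha : ∀ i, 1 ≤ i → i ≤ n → a i ∈ I ^ i)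
    (heq : x ^ n + ∑ i ∈ Finset.Icc 1 n, a i * x ^ (n - i) = 0) : g ≤ v x := by
  by_contra! hlt
  lift v x to ℕ using hlt.ne_top with d hd
  have hdg : ((d + 1 : ℕ) : ℕ∞) ≤ g := Order.add_one_le_of_lt hlt
  have hterms : ((n * d + 1 : ℕ) : ℕ∞) ≤ v (x ^ n) := by
    rw [eq_neg_of_add_eq_zero_left heq, v.map_neg]
    refine v.map_le_sum fun i hi => ?_
    obtain ⟨hi₁, hin⟩ := Finset.mem_Icc.mp hi
    rw [v.map_mul, v.map_pow, ← hd]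
    calc ((n * d + 1 : ℕ) : ℕ∞) ≤ ((i * (d + 1) + (n - i) * d : ℕ) : ℕ∞) := by
          obtain ⟨k, rfl⟩ := Nat.exists_eq_add_of_le hin
          norm_cast
          rw [Nat.add_sub_cancel_left]
          nlinarith
      _ = i • ((d + 1 : ℕ) : ℕ∞) + (n - i) • (d : ℕ∞) := by push_cast [nsmul_eq_mul]; rfl
      _ ≤ v (a i) + (n - i) • (d : ℕ∞) := by
          gcongr
          exact (nsmul_le_nsmul_right hdg i).trans (v.nsmul_le_of_mem_pow hI i (ha i hi₁ hin))
  rw [v.map_pow, ← hd, nsmul_eq_mul] at hterms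
  norm_cast at hterms
  omega

end AddValuation

theorem order_ge_of_integral_over_ideal_general
    {A : Type*} [CommRing A] {K : Type*} [Field K]
    (φ : A →+* PowerSeries K) (𝔞 : Ideal A) (m : ℕ)
    (hm : ∀ a ∈ 𝔞, (m : ℕ∞) ≤ (φ a).order)
    (x : A) (n : ℕ) (a : ℕ → A)
    (ha : ∀ i, 1 ≤ i → i ≤ n → a i ∈ 𝔞 ^ i)
    (heq : x ^ n + ∑ i ∈ Finset.Icc 1 n, a i * x ^ (n - i) = 0) :
    (m : ℕ∞) ≤ (φ x).order :=
  ((orderAddValuation K).comap φ).le_of_integral_over_ideal hm ha heq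

/-- If `α* : A → K[[t]]` is a ring homomorphism, `𝔞 ⊆ A` an ideal with
`ord_t(α*(a)) ≥ m` for all `a ∈ 𝔞`, and `x` is integral over `𝔞`
(i.e. `x^n + a₁x^{n-1} + ⋯ + aₙ = 0` with `aᵢ ∈ 𝔞^i`), then `ord_t(α*(x)) ≥ m`. -/
theorem order_ge_of_integral_over_ideal
    {A : Type*} [CommRing A] {K : Type*} [Field K]
    (φ : A →+* PowerSeries K) (𝔞 : Ideal A) (m : ℕ)
    (hm : ∀ a ∈ 𝔞, (m : ℕ∞) ≤ (φ a).order)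
    (x : A) (n : ℕ) (hn : 1 ≤ n) (a : ℕ → A)
    (ha : ∀ i, 1 ≤ i → i ≤ n → a i ∈ 𝔞 ^ i)
    (heq : x ^ n + ∑ i ∈ Finset.Icc 1 n, a i * x ^ (n - i) = 0) :
    (m : ℕ∞) ≤ (φ x).order :=
  order_ge_of_integral_over_ideal_general φ 𝔞 m hm x n a ha heq
end

section
/- Let R = ℂ[a₂, a₃, a₄, …, b₃, b₄, b₅, …] be a polynomial ring in countably many variables, localized at a₂ and b₃, and let I be the ideal generated by a₂³ − b₃² and 3a₂²a₃ − 2b₃b₄. Let K be the fraction field of R/I (which is a domain). Define α*(x) = Σ_{i≥2} aᵢtⁱ and α*(y) = Σ_{j≥3} bⱼtʲ in K[[t]]. Then the coefficient c₈ = 3a₂a₃² + 3a₂²a₄ − b₄² − 2b₃b₅ of t⁸ in α*(x³ − y²) is transcendental over the subfield ℂ(a₂, a₃, b₃, b₄) of K. -/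
open MvPolynomial

/-- The index type of the arc-space variables `a₂, a₃, …` and `b₃, b₄, …`. -/
abbrev ArcVar : Type := {i : ℕ // 2 ≤ i} ⊕ {j : ℕ // 3 ≤ j}

/-- The arc variable `aᵢ` (for `i ≥ 2`). -/
noncomputable def arcA (i : {i : ℕ // 2 ≤ i}) : MvPolynomial ArcVar ℂ := X (Sum.inl i)

/-- The arc variable `bⱼ` (for `j ≥ 3`). -/
noncomputable def arcB (j : {j : ℕ // 3 ≤ j}) : MvPolynomial ArcVar ℂ := X (Sum.inr j)

/-- `ℂ[a₂, a₃, …, b₃, b₄, …]` with `a₂` and `b₃` inverted. -/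
noncomputable abbrev ArcLoc : Type :=
  Localization.Away (arcA ⟨2, le_refl 2⟩ * arcB ⟨3, le_refl 3⟩)

/-- The ideal `I = (a₂³ − b₃², 3a₂²a₃ − 2b₃b₄)` of `ArcLoc`. -/
noncomputable def arcIdeal : Ideal ArcLoc :=
  Ideal.span
    { algebraMap (MvPolynomial ArcVar ℂ) ArcLoc
        ((arcA ⟨2, le_refl 2⟩) ^ 3 - (arcB ⟨3, le_refl 3⟩) ^ 2),
      algebraMap (MvPolynomial ArcVar ℂ) ArcLoc
        (3 * (arcA ⟨2, le_refl 2⟩) ^ 2 * arcA ⟨3, Nat.le_succ 2⟩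
          - 2 * arcB ⟨3, le_refl 3⟩ * arcB ⟨4, Nat.le_succ 3⟩) }

/-!
Translating the variable `a₄` by a constant `c ∈ ℂ` fixes `a₂, a₃, b₃, b₄` and both generators
of `I`, so it induces an automorphism `σ_c` of `K` over `F = ℂ(a₂, a₃, b₃, b₄)`. Since
`σ_c(c₈) = c₈ + 3c·a₂²` and `a₂ ≠ 0` in `K`, the element `c₈` has infinitely many conjugates
over `F`; an algebraic element has only finitely many, as they are roots of one polynomial.
-/

open Polynomial in
theorem transcendental_of_injective_orbit {F K ι : Type*} [Field F] [CommRing K] [IsDomain K]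
    [Algebra F K] [Infinite ι] (σ : ι → K ≃ₐ[F] K) {x : K}
    (hx : Function.Injective fun i => σ i x) : Transcendental F x := by
  rintro ⟨p, hp, hpx⟩
  have hroot (i : ι) : (p.map (algebraMap F K)).IsRoot (σ i x) := by
    rw [IsRoot, eval_map_algebraMap, aeval_algEquiv, AlgHom.comp_apply, hpx, map_zero]
  exact (finite_setOfPred_isRoot (map_ne_zero hp)).not_infinite
    (Set.infinite_of_injective_forall_mem hx hroot)

theorem RingHom.exists_ringEquiv_comp_eq {R K : Type*} [CommRing R] [Field K] (π : R →+* K)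
    (hfrac : ∀ x : K, ∃ p q : R, x = π p / π q) (τ : R ≃+* R)
    (hτ : ∀ p, π (τ p) = 0 ↔ π p = 0) :
    ∃ σ : K ≃+* K, ∀ p, σ (π p) = π (τ p) := by
  let J := RingHom.ker π
  let : Algebra (R ⧸ J) K := (RingHom.kerLift π).toAlgebra
  have : FaithfulSMul (R ⧸ J) K :=
    (faithfulSMul_iff_algebraMap_injective _ _).mpr (RingHom.kerLift_injective π)
  have : IsFractionRing (R ⧸ J) K := IsFractionRing.of_field _ _ fun z => by
    obtain ⟨p, q, rfl⟩ := hfrac z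
    exact ⟨Ideal.Quotient.mk J p, Ideal.Quotient.mk J q, rfl⟩
  have hJ : J = J.map (τ : R →+* R) := by
    ext p
    rw [Ideal.map_comap_of_equiv, Ideal.mem_comap, RingHom.mem_ker, RingHom.mem_ker,
      ← hτ (τ.symm p), RingEquiv.apply_symm_apply]
  exact ⟨IsFractionRing.ringEquivOfRingEquiv (Ideal.quotientEquiv J J τ hJ), fun p =>
    IsFractionRing.ringEquivOfRingEquiv_algebraMap _ (Ideal.Quotient.mk J p)⟩

namespace Localization.Away

variable {A : Type*} [CommRing A] {s : A} {G : Set A}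

theorem map_mem_span_image {B : Type*} [CommRing B] (φ : A →+* B) (hs : IsUnit (φ s)) {p : A}
    (hp : algebraMap A (Away s) p ∈ Ideal.span (algebraMap A _ '' G)) :
    φ p ∈ Ideal.span (φ '' G) := by
  have h := Ideal.mem_map_of_mem (awayLift φ s hs) hp
  rwa [Ideal.map_span, ← Set.image_comp, ← RingHom.coe_comp, IsLocalization.Away.lift_comp,
    IsLocalization.Away.lift_eq] at h

theorem algebraMap_map_mem_span (τ : A →+* A) (hs : τ s = s) (hG : ∀ g ∈ G, τ g = g) {p : A}
    (hp : algebraMap A (Away s) p ∈ Ideal.span (algebraMap A _ '' G)) :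
    algebraMap A (Away s) (τ p) ∈ Ideal.span (algebraMap A _ '' G) := by
  have hunit : IsUnit ((algebraMap A (Away s)).comp τ s) := by
    rw [RingHom.comp_apply, hs]
    exact IsLocalization.Away.algebraMap_isUnit s
  have h := map_mem_span_image _ hunit hp
  rwa [Set.image_congr (g := algebraMap A (Away s)) fun g hg => by
    rw [RingHom.comp_apply, hG g hg]] at h

theorem algebraMap_map_mem_span_iff (τ : A ≃+* A) (hs : τ s = s) (hG : ∀ g ∈ G, τ g = g)
    (p : A) :
    algebraMap A (Away s) (τ p) ∈ Ideal.span (algebraMap A _ '' G) ↔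
      algebraMap A (Away s) p ∈ Ideal.span (algebraMap A _ '' G) := by
  refine ⟨fun h => ?_, algebraMap_map_mem_span (τ : A →+* A) hs hG⟩
  simpa using algebraMap_map_mem_span (τ.symm : A →+* A) (τ.symm_apply_eq.mpr hs.symm)
    (fun g hg => τ.symm_apply_eq.mpr (hG g hg).symm) h

end Localization.Away

namespace MvPolynomial

variable {σ R : Type*} [CommRing R] [DecidableEq σ]

noncomputable def translateVar (v : σ) (c : R) : MvPolynomial σ R ≃ₐ[R] MvPolynomial σ R :=
  AlgEquiv.ofAlgHom (aeval (Function.update X v (X v + C c)))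
    (aeval (Function.update X v (X v - C c)))
    (algHom_ext fun w => by rcases eq_or_ne w v with rfl | h <;> simp [*])
    (algHom_ext fun w => by rcases eq_or_ne w v with rfl | h <;> simp [*])

@[simp]
theorem translateVar_X_self (v : σ) (c : R) : translateVar v c (X v) = X v + C c := by
  simp [translateVar]

@[simp]
theorem translateVar_X_of_ne {v w : σ} (c : R) (h : w ≠ v) : translateVar v c (X w) = X w := by
  simp [translateVar, h]

end MvPolynomial

noncomputable def arcGenerators : Set (MvPolynomial ArcVar ℂ) :=
  {(arcA ⟨2, le_refl 2⟩) ^ 3 - (arcB ⟨3, le_refl 3⟩) ^ 2,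
    3 * (arcA ⟨2, le_refl 2⟩) ^ 2 * arcA ⟨3, Nat.le_succ 2⟩
      - 2 * arcB ⟨3, le_refl 3⟩ * arcB ⟨4, Nat.le_succ 3⟩}

noncomputable def arcC8 : MvPolynomial ArcVar ℂ :=
  3 * arcA ⟨2, le_refl 2⟩ * (arcA ⟨3, Nat.le_succ 2⟩) ^ 2
    + 3 * (arcA ⟨2, le_refl 2⟩) ^ 2 * arcA ⟨4, by norm_num⟩
    - (arcB ⟨4, Nat.le_succ 3⟩) ^ 2
    - 2 * arcB ⟨3, le_refl 3⟩ * arcB ⟨5, by norm_num⟩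

theorem arcIdeal_eq_span_image :
    arcIdeal = Ideal.span (algebraMap (MvPolynomial ArcVar ℂ) ArcLoc '' arcGenerators) := by
  rw [arcIdeal, arcGenerators, Set.image_pair]

theorem algebraMap_arcA_two_notMem_arcIdeal :
    algebraMap (MvPolynomial ArcVar ℂ) ArcLoc (arcA ⟨2, le_refl 2⟩) ∉ arcIdeal := by
  intro h
  rw [arcIdeal_eq_span_image] at h
  let ev : MvPolynomial ArcVar ℂ →+* ℂ :=
    eval (Sum.elim (fun i => if i.1 = 2 then 1 else 0) (fun j => if j.1 = 3 then 1 else 0))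
  have hunit : IsUnit (ev (arcA ⟨2, le_refl 2⟩ * arcB ⟨3, le_refl 3⟩)) := by
    simp [ev, arcA, arcB]
  have hG : ev '' arcGenerators ⊆ {0} := by
    rintro _ ⟨g, hg, rfl⟩
    rcases hg with rfl | rfl <;> simp [ev, arcA, arcB]
  have := Localization.Away.map_mem_span_image ev hunit h
  simp [Ideal.span_eq_bot.mpr hG, ev, arcA] at this

noncomputable def arcShiftA4 (c : ℂ) : MvPolynomial ArcVar ℂ ≃ₐ[ℂ] MvPolynomial ArcVar ℂ :=
  translateVar (Sum.inl ⟨4, by norm_num⟩) c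

section arcShiftA4

variable (c : ℂ)

theorem arcShiftA4_arcA_of_ne {i : {i : ℕ // 2 ≤ i}} (hi : i.1 ≠ 4) :
    arcShiftA4 c (arcA i) = arcA i :=
  translateVar_X_of_ne c (by simpa [Subtype.ext_iff] using hi)

theorem arcShiftA4_arcB (j : {j : ℕ // 3 ≤ j}) : arcShiftA4 c (arcB j) = arcB j :=
  translateVar_X_of_ne c Sum.inr_ne_inl

theorem arcShiftA4_arcA_four :
    arcShiftA4 c (arcA ⟨4, by norm_num⟩) = arcA ⟨4, by norm_num⟩ + C c :=
  translateVar_X_self _ c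

theorem algebraMap_arcShiftA4_mem_arcIdeal_iff (p : MvPolynomial ArcVar ℂ) :
    algebraMap (MvPolynomial ArcVar ℂ) ArcLoc (arcShiftA4 c p) ∈ arcIdeal ↔
      algebraMap (MvPolynomial ArcVar ℂ) ArcLoc p ∈ arcIdeal := by
  rw [arcIdeal_eq_span_image]
  refine Localization.Away.algebraMap_map_mem_span_iff (arcShiftA4 c : _ ≃+* _) ?_ ?_ p
  · simp [arcShiftA4_arcA_of_ne, arcShiftA4_arcB]
  · rintro g (rfl | rfl) <;> simp [arcShiftA4_arcA_of_ne, arcShiftA4_arcB, map_ofNat]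

theorem arcShiftA4_arcC8 : arcShiftA4 c arcC8 = arcC8 + C c * (3 * arcA ⟨2, le_refl 2⟩ ^ 2) := by
  simp only [arcC8, map_sub, map_add, map_mul, map_pow, map_ofNat, arcShiftA4_arcA_four,
    arcShiftA4_arcA_of_ne c (i := ⟨2, le_refl 2⟩) (by norm_num),
    arcShiftA4_arcA_of_ne c (i := ⟨3, Nat.le_succ 2⟩) (by norm_num), arcShiftA4_arcB]
  ring

end arcShiftA4

/-- Let `K` be the fraction field of `ArcLoc/I` (a domain), presented by a ring
homomorphism `π : ℂ[a₂, a₃, …, b₃, b₄, …] → K` whose kernel is the contraction of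
`I` and whose image generates `K` as a field of fractions.  Then the coefficient
`c₈ = 3a₂a₃² + 3a₂²a₄ − b₄² − 2b₃b₅` of `t⁸` in `α*(x³ − y²)` is transcendental
over the subfield `ℂ(a₂, a₃, b₃, b₄)` of `K`. -/
theorem c8_transcendental
    {K : Type*} [Field K] (π : MvPolynomial ArcVar ℂ →+* K)
    (hker : ∀ p : MvPolynomial ArcVar ℂ,
      π p = 0 ↔ algebraMap (MvPolynomial ArcVar ℂ) ArcLoc p ∈ arcIdeal)
    (hfrac : ∀ x : K, ∃ p q : MvPolynomial ArcVar ℂ, π q ≠ 0 ∧ x = π p / π q) :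
    Transcendental
      (Subfield.closure
        (Set.range (fun z : ℂ => π (C z)) ∪
          { π (arcA ⟨2, le_refl 2⟩), π (arcA ⟨3, Nat.le_succ 2⟩),
            π (arcB ⟨3, le_refl 3⟩), π (arcB ⟨4, Nat.le_succ 3⟩) }))
      (π (3 * arcA ⟨2, le_refl 2⟩ * (arcA ⟨3, Nat.le_succ 2⟩) ^ 2
        + 3 * (arcA ⟨2, le_refl 2⟩) ^ 2 * arcA ⟨4, by norm_num⟩
        - (arcB ⟨4, Nat.le_succ 3⟩) ^ 2
        - 2 * arcB ⟨3, le_refl 3⟩ * arcB ⟨5, by norm_num⟩)) := by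
  choose σ hσ using fun c : ℂ => π.exists_ringEquiv_comp_eq
    (fun x => let ⟨p, q, _, hx⟩ := hfrac x; ⟨p, q, hx⟩) (arcShiftA4 c : _ ≃+* _)
    fun p => by rw [hker, hker]; exact algebraMap_arcShiftA4_mem_arcIdeal_iff c p
  simp only [AlgEquiv.coe_ringEquiv] at hσ
  refine transcendental_of_injective_orbit
    (fun c => AlgEquiv.ofRingEquiv (f := σ c) fun x => ?_) fun c₁ c₂ h => ?_
  · refine RingHom.eqOn_field_closure (f := σ c) (g := RingHom.id K) ?_ x.2
    rintro _ (⟨z, rfl⟩ | h)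
    · exact (hσ c (C z)).trans (congrArg π ((arcShiftA4 c).commutes z))
    · rcases h with rfl | rfl | rfl | rfl <;> simp [hσ, arcShiftA4_arcA_of_ne, arcShiftA4_arcB]
  have h3a2 : π (3 * arcA ⟨2, le_refl 2⟩ ^ 2) ≠ 0 := by
    rw [← map_ofNat C 3, map_mul, map_pow]
    exact mul_ne_zero ((map_ne_zero_iff _ (π.comp C).injective).mpr three_ne_zero)
      (pow_ne_zero 2 fun h => algebraMap_arcA_two_notMem_arcIdeal ((hker _).mp h))
  change σ c₁ (π arcC8) = σ c₂ (π arcC8) at h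
  rw [hσ, hσ, arcShiftA4_arcC8, arcShiftA4_arcC8, map_add, map_add, add_right_inj,
    map_mul π (C c₁), map_mul π (C c₂)] at h
  exact (π.comp C).injective (mul_right_cancel₀ h3a2 h)
end

section
/- The ring ℂ[a₂^{±1}, a₃, …, b₃^{±1}, b₄, …]/(a₂³ − b₃², 3a₂²a₃ − 2b₃b₄) is an integral domain. Equivalently, the ideal (a₂³ − b₃², 3a₂²a₃ − 2b₃b₄) is prime in the localization of the polynomial ring ℂ[a₂, a₃, a₄, …, b₃, b₄, …] at the multiplicative set generated by a₂ and b₃. -/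
/-!
Where `a₂` and `b₃` are invertible, the relation `a₂³ = b₃²` says exactly that `t = b₃ / a₂` satisfies
`a₂ = t²` and `b₃ = t³`, and the relation `3a₂²a₃ = 2b₃b₄` then solves for `b₄ = (3/2) t a₃`.
So the substitution `a₂ ↦ t²`, `b₃ ↦ t³`, `b₄ ↦ (3/2) t a₃`, fixing the other variables, maps the
quotient ring into the domain `K[t^{±1}, aᵢ, bⱼ]`, and `t ↦ b₃ / a₂` is a left inverse of it.
-/

open MvPolynomial

namespace CuspidalArc

section Units

variable {A : Type*} [CommRing A] {a b : Aˣ}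

theorem sq_mul_inv_eq_of_pow_three_eq_sq (h : (a : A) ^ 3 = b ^ 2) :
    ((b * a⁻¹ : Aˣ) : A) ^ 2 = a := by
  push_cast
  linear_combination (↑a⁻¹ : A) ^ 2 * h.symm + (a : A) * (a * ↑a⁻¹ + 1) * a.mul_inv

theorem pow_three_mul_inv_eq_of_pow_three_eq_sq (h : (a : A) ^ 3 = b ^ 2) :
    ((b * a⁻¹ : Aˣ) : A) ^ 3 = b := by
  push_cast
  linear_combination (b : A) * (↑a⁻¹ : A) ^ 3 * h.symm +
    (b : A) * ((a * ↑a⁻¹) ^ 2 + a * ↑a⁻¹ + 1) * a.mul_inv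

variable {K : Type*} [Field K] [NeZero (2 : K)] [Algebra K A]

theorem two_mul_algebraMap_inv_two : 2 * algebraMap K A 2⁻¹ = 1 := by
  rw [← map_ofNat (algebraMap K A) 2, ← map_mul, mul_inv_cancel₀ two_ne_zero, map_one]

theorem three_mul_algebraMap_inv_two_mul_eq {c d : A} (h : (a : A) ^ 3 = b ^ 2)
    (h' : 3 * a ^ 2 * c = 2 * b * d) : 3 * algebraMap K A 2⁻¹ * ↑(b * a⁻¹) * c = d := by
  have hw : 2 * algebraMap K A 2⁻¹ = 1 := two_mul_algebraMap_inv_two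
  set w := algebraMap K A 2⁻¹
  push_cast
  linear_combination (2 * w * d - 3 * w * b * ↑a⁻¹ * c) * b.mul_inv + d * hw +
    (3 * w * a ^ 2 * ↑b⁻¹ * c) * a.mul_inv - (3 * w * ↑a⁻¹ * ↑b⁻¹ * c) * h + (w * ↑b⁻¹) * h'

end Units

namespace ArcVar

abbrev a₂ : ArcVar := .inl ⟨2, le_rfl⟩
abbrev a₃ : ArcVar := .inl ⟨3, Nat.le_succ 2⟩
abbrev b₃ : ArcVar := .inr ⟨3, le_rfl⟩
abbrev b₄ : ArcVar := .inr ⟨4, Nat.le_succ 3⟩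

end ArcVar

open ArcVar

noncomputable section

variable (K : Type*) [Field K]

abbrev ArcLoc : Type _ := Localization.Away (X a₂ * X b₃ : MvPolynomial ArcVar K)

def cuspIdeal : Ideal (ArcLoc K) :=
  Ideal.span {algebraMap (MvPolynomial ArcVar K) (ArcLoc K) (X a₂ ^ 3 - X b₃ ^ 2),
    algebraMap (MvPolynomial ArcVar K) (ArcLoc K) (3 * X a₂ ^ 2 * X a₃ - 2 * X b₃ * X b₄)}

abbrev CuspRing : Type _ := ArcLoc K ⧸ cuspIdeal K

/-- `K[t^{±1}, xᵢ : i ∈ ArcVar]` with `t = X none` and `xᵢ = X (some i)`. -/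
abbrev ParamRing : Type _ := Localization.Away (X none : MvPolynomial (Option ArcVar) K)

abbrev paramT : ParamRing K := algebraMap (MvPolynomial (Option ArcVar) K) _ (X none)

abbrev paramX (i : ArcVar) : ParamRing K :=
  algebraMap (MvPolynomial (Option ArcVar) K) _ (X (some i))

def cuspParam : ArcVar → ParamRing K
  | .inl ⟨2, _⟩ => paramT K ^ 2
  | .inr ⟨3, _⟩ => paramT K ^ 3
  | .inr ⟨4, _⟩ => 3 * algebraMap K _ 2⁻¹ * paramT K * paramX K a₃
  | i => paramX K i

theorem isUnit_paramT : IsUnit (paramT K) := IsLocalization.Away.algebraMap_isUnit _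

def locToParam : ArcLoc K →ₐ[K] ParamRing K :=
  IsLocalization.Away.liftAlgHom (X a₂ * X b₃) (f := aeval (cuspParam K)) <| by
    simpa [cuspParam, ← pow_add] using (isUnit_paramT K).pow 5

theorem locToParam_algebraMap (p : MvPolynomial ArcVar K) :
    locToParam K (algebraMap _ _ p) = aeval (cuspParam K) p := by
  simp [locToParam]

theorem cuspIdeal_le_ker_locToParam [NeZero (2 : K)] :
    cuspIdeal K ≤ RingHom.ker (locToParam K) := by
  rw [cuspIdeal, Ideal.span_le]
  rintro _ (rfl | rfl) <;> rw [SetLike.mem_coe, RingHom.mem_ker, locToParam_algebraMap]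
  · simp only [map_sub, map_pow, aeval_X, cuspParam]
    ring
  · simp only [map_sub, map_mul, aeval_ofNat, map_pow, aeval_X, cuspParam]
    linear_combination (-3 * paramT K ^ 4 * paramX K a₃) *
      two_mul_algebraMap_inv_two (K := K) (A := ParamRing K)

def toParam [NeZero (2 : K)] : CuspRing K →ₐ[K] ParamRing K :=
  Ideal.Quotient.liftₐ (cuspIdeal K) (locToParam K) fun _ h ↦ cuspIdeal_le_ker_locToParam K h

def cuspVar (i : ArcVar) : CuspRing K :=
  Ideal.Quotient.mk _ (algebraMap (MvPolynomial ArcVar K) (ArcLoc K) (X i))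

theorem isUnit_algebraMap_X_a₂_mul_X_b₃ :
    IsUnit (algebraMap (MvPolynomial ArcVar K) (ArcLoc K) (X a₂ * X b₃)) :=
  IsLocalization.Away.algebraMap_isUnit _

theorem isUnit_cuspVar_a₂ : IsUnit (cuspVar K a₂) :=
  (isUnit_of_mul_isUnit_left (by simpa using isUnit_algebraMap_X_a₂_mul_X_b₃ K)).map _

theorem isUnit_cuspVar_b₃ : IsUnit (cuspVar K b₃) :=
  (isUnit_of_mul_isUnit_right (by simpa using isUnit_algebraMap_X_a₂_mul_X_b₃ K)).map _

theorem cuspVar_a₂_pow_three : cuspVar K a₂ ^ 3 = cuspVar K b₃ ^ 2 := by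
  have h : algebraMap (MvPolynomial ArcVar K) (ArcLoc K) (X a₂ ^ 3 - X b₃ ^ 2) ∈ cuspIdeal K :=
    Ideal.subset_span (Or.inl rfl)
  rw [← Ideal.Quotient.eq_zero_iff_mem] at h
  simp only [map_sub, map_pow] at h
  exact sub_eq_zero.mp h

theorem three_mul_cuspVar_eq :
    3 * cuspVar K a₂ ^ 2 * cuspVar K a₃ = 2 * cuspVar K b₃ * cuspVar K b₄ := by
  have h : algebraMap (MvPolynomial ArcVar K) (ArcLoc K)
      (3 * X a₂ ^ 2 * X a₃ - 2 * X b₃ * X b₄) ∈ cuspIdeal K :=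
    Ideal.subset_span (Or.inr rfl)
  rw [← Ideal.Quotient.eq_zero_iff_mem] at h
  simp only [map_sub, map_mul, map_pow, map_ofNat] at h
  exact sub_eq_zero.mp h

def cuspT : (CuspRing K)ˣ := (isUnit_cuspVar_b₃ K).unit * (isUnit_cuspVar_a₂ K).unit⁻¹

def fromParam : ParamRing K →ₐ[K] CuspRing K :=
  IsLocalization.Away.liftAlgHom (X none) (f := aeval fun o ↦ o.elim (cuspT K) (cuspVar K)) <| by
    simp

theorem fromParam_paramX (i : ArcVar) : fromParam K (paramX K i) = cuspVar K i := by
  simp [fromParam]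

theorem fromParam_paramT : fromParam K (paramT K) = cuspT K := by
  simp [fromParam]

theorem fromParam_cuspParam [NeZero (2 : K)] (i : ArcVar) :
    fromParam K (cuspParam K i) = cuspVar K i := by
  rcases i with ⟨_ | _ | _ | i, hi⟩ | ⟨_ | _ | _ | _ | _ | j, hj⟩ <;> try omega
  · change fromParam K (paramT K ^ 2) = _
    rw [map_pow, fromParam_paramT]
    exact sq_mul_inv_eq_of_pow_three_eq_sq (cuspVar_a₂_pow_three K)
  · exact fromParam_paramX K _
  · change fromParam K (paramT K ^ 3) = _
    rw [map_pow, fromParam_paramT]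
    exact pow_three_mul_inv_eq_of_pow_three_eq_sq (cuspVar_a₂_pow_three K)
  · change fromParam K (3 * algebraMap K _ 2⁻¹ * paramT K * paramX K a₃) = _
    rw [map_mul, map_mul, map_mul, map_ofNat, AlgHom.commutes, fromParam_paramT, fromParam_paramX]
    exact three_mul_algebraMap_inv_two_mul_eq (cuspVar_a₂_pow_three K) (three_mul_cuspVar_eq K)
  · exact fromParam_paramX K _

theorem leftInverse_fromParam_toParam [NeZero (2 : K)] :
    Function.LeftInverse (fromParam K) (toParam K) := by
  suffices h : (fromParam K).comp (toParam K) = AlgHom.id K _ from AlgHom.congr_fun h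
  refine Ideal.Quotient.algHom_ext _
    (IsLocalization.algHom_ext (Submonoid.powers (X a₂ * X b₃ : MvPolynomial ArcVar K)) ?_)
  refine MvPolynomial.algHom_ext fun i ↦ ?_
  change fromParam K (locToParam K (algebraMap _ _ (X i))) = cuspVar K i
  rw [locToParam_algebraMap, aeval_X, fromParam_cuspParam]

theorem cuspIdeal_isPrime [NeZero (2 : K)] : (cuspIdeal K).IsPrime := by
  rw [← Ideal.Quotient.isDomain_iff_prime]
  have : IsDomain (ParamRing K) := Localization.Away.isDomain (X_ne_zero _)
  exact (leftInverse_fromParam_toParam K).injective.isDomain (toParam K)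

end

end CuspidalArc

/-- The ideal `(a₂³ − b₃², 3a₂²a₃ − 2b₃b₄)` is prime in the localization of
`ℂ[a₂, a₃, …, b₃, b₄, …]` at (the multiplicative set generated by) `a₂` and `b₃`;
equivalently, `ℂ[a₂^{±1}, a₃, …, b₃^{±1}, b₄, …]/(a₂³ − b₃², 3a₂²a₃ − 2b₃b₄)`
is an integral domain. -/
theorem ideal_arc_cuspidal_isPrime :
    (Ideal.span
      { algebraMap (MvPolynomial ArcVar ℂ)
          (Localization.Away (arcA ⟨2, le_refl 2⟩ * arcB ⟨3, le_refl 3⟩))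
          ((arcA ⟨2, le_refl 2⟩) ^ 3 - (arcB ⟨3, le_refl 3⟩) ^ 2),
        algebraMap (MvPolynomial ArcVar ℂ)
          (Localization.Away (arcA ⟨2, le_refl 2⟩ * arcB ⟨3, le_refl 3⟩))
          (3 * (arcA ⟨2, le_refl 2⟩) ^ 2 * arcA ⟨3, by omega⟩
            - 2 * arcB ⟨3, le_refl 3⟩ * arcB ⟨4, by omega⟩) }).IsPrime :=
  CuspidalArc.cuspIdeal_isPrime ℂ
end

section
/- Let v₀ be the (2,3)-monomial valuation on ℂ[x,y] and v any valuation on ℂ(x,y) with v(x) = 2, v(y) = 3 and v(g) ≥ v₀(g) for all nonzero g ∈ ℂ[x,y] (automatic for any valuation with these values on x,y). If g is v₀-homogeneous and v(g) > v₀(g), then (x³ − y²) divides g, assuming additionally that v comes from an arc α with α*(x) = a₂t² + ⋯, α*(y) = b₃t³ + ⋯ where a₂, b₃ ≠ 0 and a₂³ = b₃². Precisely: if g ∈ ℂ[x,y] is (2,3)-homogeneous of weighted degree d, and the element g(a₂, b₃) given by substituting a₂ for x and b₃ for y in the dehomogenized form (i.e., the coefficient of t^d in α*(g)) vanishes, then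 x³ − y² divides g. -/
/-!
Writing `(a, b) = (s², s³)` with `s = b / a`, weighted homogeneity gives `g(a, b) = sᵈ · Σ cₘ`,
so the coefficients `cₘ` of `g` sum to zero and `g = Σ cₘ (xᵐ - xᵐ⁰)` for any monomial `xᵐ⁰`
of `g`. Two monomials of the same `(2,3)`-weight differ by a multiple of `x³ - y²`.
-/

open MvPolynomial

theorem sub_dvd_pow_mul_pow_sub_pow_mul_pow {R : Type*} [CommRing R] (x y : R) {p q : ℕ}
    (hp : 0 < p) (hpq : p.Coprime q) {i j i' j' : ℕ} (h : p * i + q * j = p * i' + q * j') :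
    x ^ q - y ^ p ∣ x ^ i * y ^ j - x ^ i' * y ^ j' := by
  wlog hj : j' ≤ j generalizing i j i' j'
  · exact dvd_sub_comm.mp (this h.symm (by omega))
  obtain ⟨k, hk⟩ : p ∣ j - j' :=
    hpq.dvd_of_dvd_mul_left ⟨i' - i, by rw [Nat.mul_sub, Nat.mul_sub]; omega⟩
  have hj' : j = j' + p * k := by omega
  have hi' : i' = i + q * k := by
    apply Nat.eq_of_mul_eq_mul_left hp
    subst hj'
    linarith
  have key : x ^ i * y ^ j - x ^ i' * y ^ j' =
      -(x ^ i * y ^ j' * ((x ^ q) ^ k - (y ^ p) ^ k)) := by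
    rw [hi', hj']; ring
  rw [key, dvd_neg]
  exact (sub_dvd_pow_sub_pow _ _ k).mul_left _

theorem Finsupp.weight_fin_two {M : Type*} [AddCommMonoid M] (w : Fin 2 → M) (m : Fin 2 →₀ ℕ) :
    Finsupp.weight w m = m 0 • w 0 + m 1 • w 1 := by
  rw [Finsupp.weight_apply, Finsupp.sum_fintype _ _ (by simp), Fin.sum_univ_two]

namespace MvPolynomial

theorem X_pow_sub_X_pow_dvd_monomial_sub_monomial {R : Type*} [CommRing R]
    {p q : ℕ} (hp : 0 < p) (hpq : p.Coprime q) {m m' : Fin 2 →₀ ℕ}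
    (h : Finsupp.weight ![p, q] m = Finsupp.weight ![p, q] m') :
    (X 0 ^ q - X 1 ^ p : MvPolynomial (Fin 2) R) ∣ monomial m 1 - monomial m' 1 := by
  simp only [monomial_fin_two, C_1, one_mul]
  refine sub_dvd_pow_mul_pow_sub_pow_mul_pow _ _ hp hpq ?_
  simp only [Finsupp.weight_fin_two, smul_eq_mul, Matrix.cons_val_zero, Matrix.cons_val_one] at h
  linarith

theorem dvd_of_sum_coeff_eq_zero {σ R : Type*} [CommRing R]
    {p φ : MvPolynomial σ R}
    (hp : ∀ m ∈ φ.support, ∀ m' ∈ φ.support, p ∣ monomial m 1 - monomial m' 1)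
    (hφ : ∑ m ∈ φ.support, coeff m φ = 0) : p ∣ φ := by
  obtain h | ⟨m₀, hm₀⟩ := φ.support.eq_empty_or_nonempty
  · rw [support_eq_empty.mp h]
    exact dvd_zero p
  have hφ_eq : φ = ∑ m ∈ φ.support, coeff m φ • (monomial m 1 - monomial m₀ 1) := by
    simp only [smul_sub]
    rw [Finset.sum_sub_distrib, ← Finset.sum_smul, hφ, zero_smul, sub_zero]
    conv_lhs => rw [φ.as_sum]
    simp only [smul_monomial, smul_eq_mul, mul_one]
  rw [hφ_eq]
  exact Finset.dvd_sum fun m hm => by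
    rw [smul_eq_C_mul]
    exact (hp m hm m₀ hm₀).mul_left _

theorem IsWeightedHomogeneous.aeval_pow_weight {σ R A : Type*} [CommSemiring R]
    [CommSemiring A] [Algebra R A] {w : σ → ℕ} {φ : MvPolynomial σ R} {n : ℕ}
    (hφ : IsWeightedHomogeneous w φ n) (s : A) :
    aeval (fun i => s ^ w i) φ = algebraMap R A (∑ m ∈ φ.support, coeff m φ) * s ^ n := by
  conv_lhs => rw [φ.as_sum]
  rw [map_sum, map_sum, Finset.sum_mul]
  refine Finset.sum_congr rfl fun m hm => ?_
  rw [aeval_monomial, ← hφ (mem_support_iff.mp hm), Finsupp.weight_apply, Finsupp.prod,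
    Finsupp.sum]
  simp only [← pow_mul, smul_eq_mul, Finset.prod_pow_eq_pow_sum, mul_comm]

end MvPolynomial

theorem exists_sq_eq_and_pow_three_eq {K : Type*} [Field K] {a b : K} (ha : a ≠ 0)
    (hab : a ^ 3 = b ^ 2) : ∃ s : K, s ^ 2 = a ∧ s ^ 3 = b := by
  refine ⟨b / a, ?_, ?_⟩ <;> field_simp
  · linear_combination -hab
  · linear_combination -b * hab

theorem curve_dvd_of_vanishes_at_generic_point_general
    {K : Type*} [Field K] [Algebra ℂ K]
    (a b : K) (ha : a ≠ 0) (hab : a ^ 3 = b ^ 2)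
    (g : MvPolynomial (Fin 2) ℂ) (d : ℕ)
    (hhom : IsWeightedHomogeneous ![2, 3] g d)
    (hvan : aeval ![a, b] g = 0) :
    (X 0 ^ 3 - X 1 ^ 2 : MvPolynomial (Fin 2) ℂ) ∣ g := by
  obtain ⟨s, rfl, rfl⟩ := exists_sq_eq_and_pow_three_eq ha hab
  have hs : s ≠ 0 := by rintro rfl; simp at ha
  have hpoint : ![s ^ 2, s ^ 3] = fun i => s ^ (![2, 3] : Fin 2 → ℕ) i := by
    ext i; fin_cases i <;> rfl
  rw [hpoint, hhom.aeval_pow_weight, mul_eq_zero,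
    map_eq_zero_iff _ (FaithfulSMul.algebraMap_injective ℂ K)] at hvan
  refine dvd_of_sum_coeff_eq_zero (fun m hm m' hm' => ?_) (hvan.resolve_right (pow_ne_zero _ hs))
  refine X_pow_sub_X_pow_dvd_monomial_sub_monomial (by norm_num) (by norm_num) ?_
  rw [hhom (mem_support_iff.mp hm), hhom (mem_support_iff.mp hm')]

/-- Lemma 4.3: let `a₂, b₃ ∈ K` be nonzero with `a₂³ = b₃²` (a generic point of
the cuspidal curve).  If `g ∈ ℂ[x,y]` is `(2,3)`-weighted homogeneous of degree
`d` and `g(a₂, b₃) = 0` (the coefficient of `t^d` in `α*(g)`), then `x³ − y²`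
divides `g`. -/
theorem curve_dvd_of_vanishes_at_generic_point
    {K : Type*} [Field K] [Algebra ℂ K]
    (a b : K) (ha : a ≠ 0) (hb : b ≠ 0) (hab : a ^ 3 = b ^ 2)
    (g : MvPolynomial (Fin 2) ℂ) (d : ℕ)
    (hhom : IsWeightedHomogeneous ![2, 3] g d)
    (hvan : aeval ![a, b] g = 0) :
    (X 0 ^ 3 - X 1 ^ 2 : MvPolynomial (Fin 2) ℂ) ∣ g :=
  curve_dvd_of_vanishes_at_generic_point_general a b ha hab g d hhom hvan
end
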